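/- For every real α ≥ 0 and every real β, one has Θ₀(α,β) = (α+1)²β² + (α−1)(2α²+3α+2)β + (α²−1)² ≥ 0. (Nonnegativity of Θ₀ in the proof of Lemma 4.2; its discriminant as a quadratic in β equals −α(α−1)²(4α²+7α+4) ≤ 0.) -/
import Mathlib

/-- Θ₀(α,β) = (α+1)²β² + (α−1)(2α²+3α+2)β + (α²−1)². -/
def Θ₀ (α β : ℝ) : ℝ := (α+1)^2*β^2 + (α-1)*(2*α^2+3*α+2)*β + (α^2-1)^2

/-- Nonnegativity of Θ₀ for α ≥ 0 (proof of Lemma 4.2). -/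
theorem Theta0_nonneg (α β : ℝ) (hα : 0 ≤ α) : 0 ≤ Θ₀ α β := by
  unfold Θ₀
  nlinarith [sq_nonneg (2*(α+1)^2*β + (α-1)*(2*α^2+3*α+2)),
    mul_nonneg (mul_nonneg hα (sq_nonneg (α-1))) (by nlinarith [sq_nonneg α] : (0:ℝ) ≤ 4*α^2+7*α+4),
    sq_nonneg (α+1)]
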